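/- arXiv:2501.15592 — 3 statements merged into one kernel-verified Lean document; each statement's English description precedes it below -/
import Mathlib

section
/- Let μ be a probability measure on a measurable space X, and let σ : ℝ → ℝ be Lipschitz with constant L ≥ 0 and bounded by B ≥ 0. Let f : X → ℝ be μ-integrable, let g : X → ℝ be measurable with |g(x)| ≤ C for μ-almost every x (C ≥ 0), and let w, v ∈ ℝ with |w| ≤ C_w. Then the connectivity difference satisfies |Δ(f, w) − Δ(g, v)| = |∫ f(x)·σ(w·f(x)) dμ(x) − ∫ g(x)·σ(v·g(x)) dμ(x)| ≤ (B + C·L·C_w)·∫ |f(x) − g(x)| dμ(x) + C²·L·|w − v|. -/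
/-!
Write `f σ(w f) - g σ(v g) = (f - g) σ(w f) + g (σ(w f) - σ(v g))`. The first term is bounded
by `B |f - g|`, and by the Lipschitz property the second by `C L |w f - v g|`, where
`w f - v g = w (f - g) + g (w - v)` gives `|w f - v g| ≤ C_w |f - g| + C |w - v|`.
Integrating this pointwise bound against the probability measure `μ` gives the theorem.
-/

open MeasureTheory

theorem abs_mul_sub_mul_le_of_abs_le {w v a b Cw C : ℝ} (hw : |w| ≤ Cw) (hb : |b| ≤ C) :
    |w * a - v * b| ≤ Cw * |a - b| + C * |w - v| :=
  calc |w * a - v * b| = |w * (a - b) + b * (w - v)| := by ring_nf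
    _ ≤ |w| * |a - b| + |b| * |w - v| := by
        simpa only [abs_mul] using abs_add_le (w * (a - b)) (b * (w - v))
    _ ≤ Cw * |a - b| + C * |w - v| := by gcongr

theorem abs_mul_comp_sub_mul_comp_le {σ : ℝ → ℝ} {L B C Cw : ℝ} (hL : 0 ≤ L)
    (hLip : ∀ x y : ℝ, |σ x - σ y| ≤ L * |x - y|) (hBd : ∀ x : ℝ, |σ x| ≤ B)
    {a b w v : ℝ} (hw : |w| ≤ Cw) (hb : |b| ≤ C) :
    |a * σ (w * a) - b * σ (v * b)| ≤ (B + C * L * Cw) * |a - b| + C ^ 2 * L * |w - v| := by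
  have hσ_diff : |σ (w * a) - σ (v * b)| ≤ L * (Cw * |a - b| + C * |w - v|) :=
    (hLip _ _).trans (mul_le_mul_of_nonneg_left (abs_mul_sub_mul_le_of_abs_le hw hb) hL)
  calc |a * σ (w * a) - b * σ (v * b)|
      = |(a - b) * σ (w * a) + b * (σ (w * a) - σ (v * b))| := by ring_nf
    _ ≤ |a - b| * |σ (w * a)| + |b| * |σ (w * a) - σ (v * b)| := by
        simpa only [abs_mul] using abs_add_le ((a - b) * σ (w * a)) (b * (σ (w * a) - σ (v * b)))
    _ ≤ |a - b| * B + C * (L * (Cw * |a - b| + C * |w - v|)) := by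
        gcongr
        · exact hBd _
        · exact (abs_nonneg b).trans hb
    _ = (B + C * L * Cw) * |a - b| + C ^ 2 * L * |w - v| := by ring

section Integral

variable {X : Type*} [MeasurableSpace X] {μ : Measure X}

theorem MeasureTheory.Integrable.mul_comp_of_abs_le {f : X → ℝ} (hf : Integrable f μ)
    {φ : ℝ → ℝ} (hφ : Continuous φ) {B : ℝ} (hφB : ∀ x, |φ x| ≤ B) :
    Integrable (fun x => f x * φ (f x)) μ :=
  hf.mul_bdd (hφ.comp_aestronglyMeasurable hf.aestronglyMeasurable)
    (ae_of_all _ fun x => hφB (f x))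

theorem abs_integral_sub_le_integral_of_ae {F G H : X → ℝ} (hF : Integrable F μ)
    (hG : Integrable G μ) (hH : Integrable H μ) (h : ∀ᵐ x ∂μ, |F x - G x| ≤ H x) :
    |(∫ x, F x ∂μ) - ∫ x, G x ∂μ| ≤ ∫ x, H x ∂μ := by
  rw [← integral_sub hF hG]
  exact abs_integral_le_integral_abs.trans (integral_mono_ae (hF.sub hG).abs hH h)

end Integral

theorem connectivity_difference_bound_general
    {X : Type*} [MeasurableSpace X] (μ : Measure X) [IsProbabilityMeasure μ]
    (σ : ℝ → ℝ) (L B C Cw w v : ℝ)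
    (hL : 0 ≤ L)
    (hLip : ∀ x y : ℝ, |σ x - σ y| ≤ L * |x - y|)
    (hBd : ∀ x : ℝ, |σ x| ≤ B)
    (f g : X → ℝ)
    (hf : Integrable f μ)
    (hgm : Measurable g)
    (hg : ∀ᵐ x ∂μ, |g x| ≤ C)
    (hw : |w| ≤ Cw) :
    |(∫ x, f x * σ (w * f x) ∂μ) - ∫ x, g x * σ (v * g x) ∂μ| ≤
      (B + C * L * Cw) * (∫ x, |f x - g x| ∂μ) + C ^ 2 * L * |w - v| := by
  have hσ : Continuous σ :=
    (LipschitzWith.of_dist_le_mul (K := L.toNNReal) fun x y => by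
      simpa only [Real.dist_eq, Real.coe_toNNReal L hL] using hLip x y).continuous
  have hg_int : Integrable g μ :=
    (integrable_const C).mono' hgm.aestronglyMeasurable hg
  have hfg_int : Integrable (fun x => |f x - g x|) μ := (hf.sub hg_int).abs
  calc |(∫ x, f x * σ (w * f x) ∂μ) - ∫ x, g x * σ (v * g x) ∂μ|
      ≤ ∫ x, ((B + C * L * Cw) * |f x - g x| + C ^ 2 * L * |w - v|) ∂μ :=
        abs_integral_sub_le_integral_of_ae
          (hf.mul_comp_of_abs_le (hσ.comp (continuous_const_mul w)) fun _ => hBd _)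
          (hg_int.mul_comp_of_abs_le (hσ.comp (continuous_const_mul v)) fun _ => hBd _)
          ((hfg_int.const_mul _).add (integrable_const _))
          (hg.mono fun _ hgx => abs_mul_comp_sub_mul_comp_le hL hLip hBd hw hgx)
    _ = (B + C * L * Cw) * (∫ x, |f x - g x| ∂μ) + C ^ 2 * L * |w - v| := by
        rw [integral_add (hfg_int.const_mul _) (integrable_const _), integral_const_mul,
          integral_const, probReal_univ, one_smul]

/-- For a probability measure `μ`, a Lipschitz and bounded
activation `σ`, a `μ`-integrable `f`, a measurable `g` with `|g| ≤ C` a.e., and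
weights `w, v` with `|w| ≤ C_w`, the connectivity difference satisfies
`|∫ f·σ(w·f) dμ − ∫ g·σ(v·g) dμ| ≤ (B + C·L·C_w)·∫ |f − g| dμ + C²·L·|w − v|`. -/
theorem connectivity_difference_bound
    {X : Type*} [MeasurableSpace X] (μ : Measure X) [IsProbabilityMeasure μ]
    (σ : ℝ → ℝ) (L B C Cw w v : ℝ)
    (hL : 0 ≤ L) (hB : 0 ≤ B) (hC : 0 ≤ C)
    (hLip : ∀ x y : ℝ, |σ x - σ y| ≤ L * |x - y|)
    (hBd : ∀ x : ℝ, |σ x| ≤ B)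
    (f g : X → ℝ)
    (hf : Integrable f μ)
    (hgm : Measurable g)
    (hg : ∀ᵐ x ∂μ, |g x| ≤ C)
    (hw : |w| ≤ Cw) :
    |(∫ x, f x * σ (w * f x) ∂μ) - ∫ x, g x * σ (v * g x) ∂μ| ≤
      (B + C * L * Cw) * (∫ x, |f x - g x| ∂μ) + C ^ 2 * L * |w - v| :=
  connectivity_difference_bound_general μ σ L B C Cw w v hL hLip hBd f g hf hgm hg hw
end

section
/- Let μ be a probability measure on a measurable space X, and let σ : ℝ → ℝ be Lipschitz with constant L ≥ 0 and bounded by B ≥ 0. For each layer l = 1, …, N, let f_l : X → ℝ be μ-integrable and let g_l : X → ℝ be measurable with |g_l(x)| ≤ C for μ-almost every x (C ≥ 0). Let w, v ∈ ℝ with |w| ≤ C_w. Then the total connectivity difference over all layers satisfies Σ_{l=1}^{N} |Δ(f_l, w) − Δ(g_l, v)| ≤ (B + C·L·C_w)·Σ_{l=1}^{N} ∫ |f_l(x) − g_l(x)| dμ(x) + N·C²·L·|w − v|. -/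
/-!
Pointwise, `a σ(wa) − b σ(vb)` splits as
`(a − b) σ(wa) + b (σ(wa) − σ(wb)) + b (σ(wb) − σ(vb))`; boundedness of `σ` controls the first
term and the Lipschitz bound together with `|b| ≤ C`, `|w| ≤ C_w` the other two. Integrating
against the probability measure gives the bound for one layer, and summing gives the total.
-/

open MeasureTheory

section

variable {X : Type*} [MeasurableSpace X] {μ : Measure X} {σ : ℝ → ℝ} {L B C Cw w v : ℝ}

/-- The connectivity `Δ(f, w) = ∫ f · σ(w f) dμ`. -/
noncomputable def connectivity (μ : Measure X) (σ : ℝ → ℝ) (f : X → ℝ) (w : ℝ) : ℝ :=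
  ∫ x, f x * σ (w * f x) ∂μ

lemma lipschitzWith_toNNReal_of_abs_sub_le (hLip : ∀ x y : ℝ, |σ x - σ y| ≤ L * |x - y|) :
    LipschitzWith L.toNNReal σ :=
  LipschitzWith.of_dist_le_mul fun x y => by
    simpa only [Real.dist_eq, Real.coe_toNNReal'] using
      (hLip x y).trans (mul_le_mul_of_nonneg_right (le_max_left L 0) (abs_nonneg _))

lemma abs_mul_comp_mul_sub_le (hLip : ∀ x y : ℝ, |σ x - σ y| ≤ L * |x - y|)
    (hBd : ∀ x : ℝ, |σ x| ≤ B) {a b : ℝ} (hb : |b| ≤ C) (hw : |w| ≤ Cw) :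
    |a * σ (w * a) - b * σ (v * b)| ≤ (B + C * L * Cw) * |a - b| + C ^ 2 * L * |w - v| := by
  have hL : 0 ≤ L := by simpa using (abs_nonneg _).trans (hLip 1 0)
  have hC : 0 ≤ C := (abs_nonneg b).trans hb
  have h_out : |(a - b) * σ (w * a)| ≤ B * |a - b| := by
    rw [abs_mul, mul_comm]
    exact mul_le_mul_of_nonneg_right (hBd _) (abs_nonneg _)
  have h_in : |b * (σ (w * a) - σ (w * b))| ≤ C * L * Cw * |a - b| :=
    calc |b * (σ (w * a) - σ (w * b))| ≤ C * (L * |w * a - w * b|) := by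
          rw [abs_mul]; exact mul_le_mul hb (hLip _ _) (abs_nonneg _) hC
      _ = C * L * |w| * |a - b| := by rw [← mul_sub, abs_mul]; ring
      _ ≤ C * L * Cw * |a - b| := by gcongr
  have h_weight : |b * (σ (w * b) - σ (v * b))| ≤ C ^ 2 * L * |w - v| :=
    calc |b * (σ (w * b) - σ (v * b))| ≤ |b| * (L * |w * b - v * b|) := by
          rw [abs_mul]; gcongr; exact hLip _ _
      _ = L * |b| ^ 2 * |w - v| := by rw [← sub_mul, abs_mul]; ring
      _ ≤ C ^ 2 * L * |w - v| := by rw [mul_comm L]; gcongr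
  calc |a * σ (w * a) - b * σ (v * b)|
      = |(a - b) * σ (w * a) + b * (σ (w * a) - σ (w * b)) + b * (σ (w * b) - σ (v * b))| := by
        ring_nf
    _ ≤ B * |a - b| + C * L * Cw * |a - b| + C ^ 2 * L * |w - v| :=
        (abs_add_three _ _ _).trans (add_le_add_three h_out h_in h_weight)
    _ = (B + C * L * Cw) * |a - b| + C ^ 2 * L * |w - v| := by ring

lemma Integrable.mul_comp_const_mul (hσ : Measurable σ) (hBd : ∀ x : ℝ, |σ x| ≤ B)
    {f : X → ℝ} (hf : Integrable f μ) (w : ℝ) :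
    Integrable (fun x => f x * σ (w * f x)) μ := by
  simpa only [Function.comp_apply, mul_comm (σ _)] using
    hf.bdd_mul (hσ.comp_aemeasurable (hf.aemeasurable.const_mul w)).aestronglyMeasurable
      (ae_of_all _ fun x => (Real.norm_eq_abs _).trans_le (hBd _))

theorem abs_connectivity_sub_le [IsProbabilityMeasure μ]
    (hLip : ∀ x y : ℝ, |σ x - σ y| ≤ L * |x - y|) (hBd : ∀ x : ℝ, |σ x| ≤ B)
    {f g : X → ℝ} (hf : Integrable f μ) (hgm : Measurable g) (hg : ∀ᵐ x ∂μ, |g x| ≤ C)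
    (hw : |w| ≤ Cw) :
    |connectivity μ σ f w - connectivity μ σ g v| ≤
      (B + C * L * Cw) * (∫ x, |f x - g x| ∂μ) + C ^ 2 * L * |w - v| := by
  have hσ : Measurable σ := (lipschitzWith_toNNReal_of_abs_sub_le hLip).continuous.measurable
  have hgi : Integrable g μ :=
    .of_bound hgm.aestronglyMeasurable C (hg.mono fun x hx => (Real.norm_eq_abs _).trans_le hx)
  have hfσ := Integrable.mul_comp_const_mul hσ hBd hf w
  have hgσ := Integrable.mul_comp_const_mul hσ hBd hgi v
  have hfg : Integrable (fun x => |f x - g x|) μ := (hf.sub hgi).abs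
  calc |connectivity μ σ f w - connectivity μ σ g v|
      = |∫ x, (f x * σ (w * f x) - g x * σ (v * g x)) ∂μ| := by
        rw [connectivity, connectivity, integral_sub hfσ hgσ]
    _ ≤ ∫ x, |f x * σ (w * f x) - g x * σ (v * g x)| ∂μ := abs_integral_le_integral_abs
    _ ≤ ∫ x, ((B + C * L * Cw) * |f x - g x| + C ^ 2 * L * |w - v|) ∂μ :=
        integral_mono_ae (hfσ.sub hgσ).abs ((hfg.const_mul _).add (integrable_const _))
          (hg.mono fun x hx => abs_mul_comp_mul_sub_le hLip hBd hx hw)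
    _ = (B + C * L * Cw) * (∫ x, |f x - g x| ∂μ) + C ^ 2 * L * |w - v| := by
        rw [integral_add (hfg.const_mul _) (integrable_const _), integral_const_mul,
          integral_const, probReal_univ, one_smul]

end

theorem total_connectivity_difference_bound_general
    {X : Type*} [MeasurableSpace X] (μ : Measure X) [IsProbabilityMeasure μ]
    (σ : ℝ → ℝ) (L B C Cw w v : ℝ) (N : ℕ)
    (hLip : ∀ x y : ℝ, |σ x - σ y| ≤ L * |x - y|)
    (hBd : ∀ x : ℝ, |σ x| ≤ B)
    (f g : Fin N → X → ℝ)
    (hf : ∀ l, Integrable (f l) μ)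
    (hgm : ∀ l, Measurable (g l))
    (hg : ∀ l, ∀ᵐ x ∂μ, |g l x| ≤ C)
    (hw : |w| ≤ Cw) :
    ∑ l : Fin N, |(∫ x, f l x * σ (w * f l x) ∂μ) - ∫ x, g l x * σ (v * g l x) ∂μ| ≤
      (B + C * L * Cw) * (∑ l : Fin N, ∫ x, |f l x - g l x| ∂μ) +
        (N : ℝ) * C ^ 2 * L * |w - v| :=
  calc ∑ l, |connectivity μ σ (f l) w - connectivity μ σ (g l) v|
      ≤ ∑ l : Fin N, ((B + C * L * Cw) * (∫ x, |f l x - g l x| ∂μ) + C ^ 2 * L * |w - v|) :=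
        Finset.sum_le_sum fun l _ => abs_connectivity_sub_le hLip hBd (hf l) (hgm l) (hg l) hw
    _ = (B + C * L * Cw) * (∑ l : Fin N, ∫ x, |f l x - g l x| ∂μ) +
        (N : ℝ) * C ^ 2 * L * |w - v| := by
        rw [Finset.sum_add_distrib, ← Finset.mul_sum, Finset.sum_const, Finset.card_univ,
          Fintype.card_fin, nsmul_eq_mul]
        ring

/-- Summing the layerwise connectivity-difference bound over the
layers `l = 1, …, N`:
`Σ_l |Δ(f_l, w) − Δ(g_l, v)| ≤ (B + C·L·C_w)·Σ_l ∫ |f_l − g_l| dμ + N·C²·L·|w − v|`. -/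
theorem total_connectivity_difference_bound
    {X : Type*} [MeasurableSpace X] (μ : Measure X) [IsProbabilityMeasure μ]
    (σ : ℝ → ℝ) (L B C Cw w v : ℝ) (N : ℕ)
    (hL : 0 ≤ L) (hB : 0 ≤ B) (hC : 0 ≤ C)
    (hLip : ∀ x y : ℝ, |σ x - σ y| ≤ L * |x - y|)
    (hBd : ∀ x : ℝ, |σ x| ≤ B)
    (f g : Fin N → X → ℝ)
    (hf : ∀ l, Integrable (f l) μ)
    (hgm : ∀ l, Measurable (g l))
    (hg : ∀ l, ∀ᵐ x ∂μ, |g l x| ≤ C)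
    (hw : |w| ≤ Cw) :
    ∑ l : Fin N, |(∫ x, f l x * σ (w * f l x) ∂μ) - ∫ x, g l x * σ (v * g l x) ∂μ| ≤
      (B + C * L * Cw) * (∑ l : Fin N, ∫ x, |f l x - g l x| ∂μ) +
        (N : ℝ) * C ^ 2 * L * |w - v| :=
  total_connectivity_difference_bound_general μ σ L B C Cw w v N hLip hBd f g hf hgm hg hw
end

section
/- Let μ be a probability measure on a measurable space X, and let σ : ℝ → ℝ be Lipschitz with constant L > 0 and bounded by B ≥ 0. For each layer l = 1, …, N (N ≥ 1), let f_l : X → ℝ be μ-integrable and let g_l : X → ℝ be measurable with |g_l(x)| ≤ C for μ-almost every x (C > 0). Let w, v ∈ ℝ with |w| ≤ C_w, and set K := (B + C·L·C_w)·Σ_{l=1}^{N} ∫ |f_l(x) − g_l(x)| dμ(x). If the total connectivity difference satisfies Σ_{l=1}^{N} |Δ(f_l, w) − Δ(g_l, v)| ≥ ε for some ε ≥ K, then the weights must satisfy |w − v| ≥ (ε − K) / (N·C²·L). Equivalently, if |w − v| < (ε − K)/(N·C²·L) then the total connectivity difference is strictly below ε, so closeness of the weights to the optimum forces closeness of the information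 flow to the optimal information flow. -/
open MeasureTheory

/-- With `K := (B + C·L·C_w)·Σ_l ∫ |f_l − g_l| dμ`, if the total
connectivity difference `Σ_l |Δ(f_l, w) − Δ(g_l, v)|` is at least `ε` for some
`ε ≥ K`, then `|w − v| ≥ (ε − K) / (N·C²·L)`: closeness of the weights to the
optimum forces closeness of the information flow to the optimal information flow. -/
theorem weight_gap_from_connectivity_gap
    {X : Type*} [MeasurableSpace X] (μ : Measure X) [IsProbabilityMeasure μ]
    (σ : ℝ → ℝ) (L B C Cw w v ε : ℝ) (N : ℕ)
    (hN : 1 ≤ N) (hL : 0 < L) (hB : 0 ≤ B) (hC : 0 < C)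
    (hLip : ∀ x y : ℝ, |σ x - σ y| ≤ L * |x - y|)
    (hBd : ∀ x : ℝ, |σ x| ≤ B)
    (f g : Fin N → X → ℝ)
    (hf : ∀ l, Integrable (f l) μ)
    (hgm : ∀ l, Measurable (g l))
    (hg : ∀ l, ∀ᵐ x ∂μ, |g l x| ≤ C)
    (hw : |w| ≤ Cw)
    (hεK : (B + C * L * Cw) * (∑ l : Fin N, ∫ x, |f l x - g l x| ∂μ) ≤ ε)
    (hgap : ε ≤
      ∑ l : Fin N, |(∫ x, f l x * σ (w * f l x) ∂μ) - ∫ x, g l x * σ (v * g l x) ∂μ|) :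
    (ε - (B + C * L * Cw) * (∑ l : Fin N, ∫ x, |f l x - g l x| ∂μ)) /
        ((N : ℝ) * C ^ 2 * L) ≤ |w - v| := by
  have hCw : 0 ≤ Cw := le_trans (abs_nonneg w) hw
  have hσc : Continuous σ := by
    have : LipschitzWith (Real.toNNReal L) σ := by
      apply LipschitzWith.of_dist_le_mul
      intro x y
      rw [Real.dist_eq, Real.dist_eq]
      simpa [Real.coe_toNNReal L hL.le] using hLip x y
    exact this.continuous
  -- per-layer bound
  have key : ∀ l : Fin N,
      |(∫ x, f l x * σ (w * f l x) ∂μ) - ∫ x, g l x * σ (v * g l x) ∂μ| ≤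
        (B + C * L * Cw) * (∫ x, |f l x - g l x| ∂μ) + C ^ 2 * L * |w - v| := by
    intro l
    have hgint : Integrable (g l) μ := by
      refine Integrable.mono' (integrable_const C) (hgm l).aestronglyMeasurable ?_
      filter_upwards [hg l] with x hx using by simpa using hx
    have h1 : Integrable (fun x => f l x * σ (w * f l x)) μ := by
      refine Integrable.mono' ((hf l).abs.const_mul B) ?_ ?_
      · exact (hf l).aestronglyMeasurable.mul
          (hσc.comp_aestronglyMeasurable
            (aestronglyMeasurable_const.mul (hf l).aestronglyMeasurable))
      · refine Filter.Eventually.of_forall fun x => ?_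
        rw [Real.norm_eq_abs, abs_mul]
        calc |f l x| * |σ (w * f l x)| ≤ |f l x| * B :=
              mul_le_mul_of_nonneg_left (hBd _) (abs_nonneg _)
          _ = B * |f l x| := mul_comm _ _
    have h2 : Integrable (fun x => g l x * σ (v * g l x)) μ := by
      refine Integrable.mono' (integrable_const (C * B)) ?_ ?_
      · exact hgint.aestronglyMeasurable.mul
          (hσc.comp_aestronglyMeasurable
            (aestronglyMeasurable_const.mul hgint.aestronglyMeasurable))
      · filter_upwards [hg l] with x hx
        rw [Real.norm_eq_abs, abs_mul]
        exact mul_le_mul hx (hBd _) (abs_nonneg _) hC.le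
    have hsubint : Integrable (fun x => |f l x - g l x|) μ := ((hf l).sub hgint).abs
    have hbint : Integrable
        (fun x => (B + C * L * Cw) * |f l x - g l x| + C ^ 2 * L * |w - v|) μ :=
      (hsubint.const_mul _).add (integrable_const _)
    have hptw : ∀ᵐ x ∂μ, |f l x * σ (w * f l x) - g l x * σ (v * g l x)| ≤
        (B + C * L * Cw) * |f l x - g l x| + C ^ 2 * L * |w - v| := by
      filter_upwards [hg l] with x hx
      have e1 : f l x * σ (w * f l x) - g l x * σ (v * g l x)
          = (f l x - g l x) * σ (w * f l x)
            + g l x * (σ (w * f l x) - σ (v * g l x)) := by ring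
      have h3 : |σ (w * f l x) - σ (v * g l x)| ≤ L * |w * f l x - v * g l x| := hLip _ _
      have h4 : |w * f l x - v * g l x| ≤ Cw * |f l x - g l x| + |w - v| * C := by
        have e2 : w * f l x - v * g l x = w * (f l x - g l x) + (w - v) * g l x := by ring
        rw [e2]
        calc |w * (f l x - g l x) + (w - v) * g l x|
            ≤ |w * (f l x - g l x)| + |(w - v) * g l x| := abs_add_le _ _
          _ = |w| * |f l x - g l x| + |w - v| * |g l x| := by rw [abs_mul, abs_mul]
          _ ≤ Cw * |f l x - g l x| + |w - v| * C := by
              gcongr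
        -- done
      calc |f l x * σ (w * f l x) - g l x * σ (v * g l x)|
          ≤ |(f l x - g l x) * σ (w * f l x)|
            + |g l x * (σ (w * f l x) - σ (v * g l x))| := by
            rw [e1]; exact abs_add_le _ _
        _ = |f l x - g l x| * |σ (w * f l x)|
            + |g l x| * |σ (w * f l x) - σ (v * g l x)| := by rw [abs_mul, abs_mul]
        _ ≤ |f l x - g l x| * B + C * (L * (Cw * |f l x - g l x| + |w - v| * C)) := by
            refine add_le_add (mul_le_mul_of_nonneg_left (hBd _) (abs_nonneg _))
              (mul_le_mul hx (h3.trans (mul_le_mul_of_nonneg_left h4 hL.le))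
                (abs_nonneg _) hC.le)
        _ = (B + C * L * Cw) * |f l x - g l x| + C ^ 2 * L * |w - v| := by ring
    calc |(∫ x, f l x * σ (w * f l x) ∂μ) - ∫ x, g l x * σ (v * g l x) ∂μ|
        = |∫ x, (f l x * σ (w * f l x) - g l x * σ (v * g l x)) ∂μ| := by
          rw [integral_sub h1 h2]
      _ ≤ ∫ x, |f l x * σ (w * f l x) - g l x * σ (v * g l x)| ∂μ := by
          simpa [Real.norm_eq_abs] using norm_integral_le_integral_norm
            (fun x => f l x * σ (w * f l x) - g l x * σ (v * g l x)) (μ := μ)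
      _ ≤ ∫ x, ((B + C * L * Cw) * |f l x - g l x| + C ^ 2 * L * |w - v|) ∂μ :=
          integral_mono_ae (h1.sub h2).abs hbint hptw
      _ = (B + C * L * Cw) * (∫ x, |f l x - g l x| ∂μ) + C ^ 2 * L * |w - v| := by
          rw [integral_add (hsubint.const_mul _) (integrable_const _),
            integral_const_mul, integral_const]
          simp
  -- sum the bounds
  have hsum : ε ≤ (B + C * L * Cw) * (∑ l : Fin N, ∫ x, |f l x - g l x| ∂μ)
      + (N : ℝ) * (C ^ 2 * L * |w - v|) := by
    calc ε ≤ ∑ l : Fin N, |(∫ x, f l x * σ (w * f l x) ∂μ)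
              - ∫ x, g l x * σ (v * g l x) ∂μ| := hgap
      _ ≤ ∑ l : Fin N, ((B + C * L * Cw) * (∫ x, |f l x - g l x| ∂μ)
              + C ^ 2 * L * |w - v|) := Finset.sum_le_sum fun l _ => key l
      _ = (B + C * L * Cw) * (∑ l : Fin N, ∫ x, |f l x - g l x| ∂μ)
              + (N : ℝ) * (C ^ 2 * L * |w - v|) := by
          rw [Finset.sum_add_distrib, ← Finset.mul_sum, Finset.sum_const]
          simp [mul_comm]
  have hNpos : (0 : ℝ) < (N : ℝ) := by exact_mod_cast hN
  have hden : 0 < (N : ℝ) * C ^ 2 * L := by positivity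
  rw [div_le_iff₀ hden]
  nlinarith [hsum]
end
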